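/- arXiv:1509.09053 — 4 statements merged into one kernel-verified Lean document; each statement's English description precedes it below -/
import Mathlib

section
/- The ℓ-th moment of a hypergeometric random variable X with parameters τ, w, m can be written as a polynomial in w: E[X^ℓ] = Σ_{i=0}^{ℓ*} w^i Σ_{j=i}^{ℓ*} (-1)^{j-i} · s(j,i) · S(ℓ,j) · C(m,j) / C(τ,j), where ℓ* = min{ℓ, m}, s denotes unsigned Stirling numbers of the first kind and S denotes Stirling numbers of the second kind. -/
open Finset

/-- Stirling numbers of the second kind. -/
def stirlingSnd : ℕ → ℕ → ℕ
  | 0, 0 => 1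
  | 0, _ + 1 => 0
  | _ + 1, 0 => 0
  | n + 1, k + 1 => stirlingSnd n k + (k + 1) * stirlingSnd n (k + 1)

/-- Unsigned Stirling numbers of the first kind. -/
def stirlingFst : ℕ → ℕ → ℕ
  | 0, 0 => 1
  | 0, _ + 1 => 0
  | _ + 1, 0 => 0
  | n + 1, k + 1 => stirlingFst n k + n * stirlingFst n (k + 1)

lemma stirlingSnd_succ_succ (n k : ℕ) :
    stirlingSnd (n+1) (k+1) = stirlingSnd n k + (k + 1) * stirlingSnd n (k+1) := rfl

lemma stirlingFst_succ_succ (n k : ℕ) :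
    stirlingFst (n+1) (k+1) = stirlingFst n k + n * stirlingFst n (k+1) := rfl

lemma stirlingSnd_succ_zero (n : ℕ) : stirlingSnd (n+1) 0 = 0 := rfl

lemma stirlingFst_succ_zero (n : ℕ) : stirlingFst (n+1) 0 = 0 := rfl

lemma stirlingSnd_eq_zero : ∀ {n k : ℕ}, n < k → stirlingSnd n k = 0 := by
  intro n
  induction n with
  | zero =>
    intro k h
    rcases k with _ | k
    · omega
    · rfl
  | succ n ih =>
    intro k h
    rcases k with _ | k
    · omega
    · rw [stirlingSnd_succ_succ, ih (by omega), ih (by omega)]; simp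

lemma stirlingFst_eq_zero : ∀ {n k : ℕ}, n < k → stirlingFst n k = 0 := by
  intro n
  induction n with
  | zero =>
    intro k h
    rcases k with _ | k
    · omega
    · rfl
  | succ n ih =>
    intro k h
    rcases k with _ | k
    · omega
    · rw [stirlingFst_succ_succ, ih (by omega), ih (by omega)]; simp

lemma mul_descFactorial (k j : ℕ) :
    k * k.descFactorial j = k.descFactorial (j+1) + j * k.descFactorial j := by
  rcases le_or_gt j k with h | h
  · rw [Nat.descFactorial_succ, ← Nat.add_mul, Nat.sub_add_cancel h]
  · rw [Nat.descFactorial_eq_zero_iff_lt.mpr h,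
      Nat.descFactorial_eq_zero_iff_lt.mpr (by omega)]
    simp

lemma pow_eq_sum_stirlingSnd (ℓ k : ℕ) :
    k ^ ℓ = ∑ j ∈ range (ℓ+1), stirlingSnd ℓ j * k.descFactorial j := by
  induction ℓ with
  | zero => simp [stirlingSnd]
  | succ ℓ ih =>
    have h1 : k ^ (ℓ+1) = ∑ j ∈ range (ℓ+1), stirlingSnd ℓ j * (k * k.descFactorial j) := by
      rw [pow_succ, ih, Finset.sum_mul]
      exact Finset.sum_congr rfl fun j _ => by ring
    have h2 : ∑ j ∈ range (ℓ+1+1), j * stirlingSnd ℓ j * k.descFactorial j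
        = ∑ j ∈ range (ℓ+1), j * stirlingSnd ℓ j * k.descFactorial j := by
      rw [Finset.sum_range_succ, stirlingSnd_eq_zero (by omega)]; simp
    have h3 : ∑ j ∈ range (ℓ+1+1), j * stirlingSnd ℓ j * k.descFactorial j
        = ∑ j ∈ range (ℓ+1), (j+1) * stirlingSnd ℓ (j+1) * k.descFactorial (j+1) := by
      rw [Finset.sum_range_succ']; simp
    rw [h1]
    rw [Finset.sum_range_succ' (fun j => stirlingSnd (ℓ+1) j * k.descFactorial j) (ℓ+1)]
    simp only [stirlingSnd_succ_succ, stirlingSnd_succ_zero, Nat.zero_mul, Nat.add_zero, zero_mul]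
    simp only [mul_descFactorial, Nat.mul_add, Nat.add_mul]
    rw [Finset.sum_add_distrib, Finset.sum_add_distrib]
    have h4 : ∑ j ∈ range (ℓ+1), stirlingSnd ℓ j * (j * k.descFactorial j)
        = ∑ j ∈ range (ℓ+1), (j+1) * stirlingSnd ℓ (j+1) * k.descFactorial (j+1) := by
      rw [← h3, h2]
      exact Finset.sum_congr rfl fun j _ => by ring
    rw [h4]
    congr 1
    exact Finset.sum_congr rfl fun j _ => by ring

lemma descPoch_eval_sum (j : ℕ) (x : ℝ) :
    (descPochhammer ℝ j).eval x
      = ∑ i ∈ range (j+1), (-1:ℝ)^j * (-1)^i * (stirlingFst j i : ℝ) * x^i := by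
  induction j with
  | zero => simp [stirlingFst]
  | succ j ih =>
    rw [descPochhammer_succ_eval, ih]
    set f : ℕ → ℝ := fun i => (-1:ℝ)^j * (-1)^i * (stirlingFst j i : ℝ) * x^i with hf
    have key : ∑ i ∈ range (j+1), (-1:ℝ)^j * (-1)^i * (stirlingFst j (i+1) : ℝ) * x^(i+1)
        = (stirlingFst j 0 : ℝ) * (-1)^j - ∑ i ∈ range (j+1), f i := by
      have e1 : ∀ i ∈ range (j+1),
          (-1:ℝ)^j * (-1)^i * (stirlingFst j (i+1) : ℝ) * x^(i+1) = -(f (i+1)) := by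
        intro i _
        simp only [hf]
        ring
      rw [Finset.sum_congr rfl e1, Finset.sum_neg_distrib]
      have e2 : ∑ i ∈ range (j+1), f (i+1)
          = ∑ i ∈ range (j+2), f i - f 0 := by
        rw [Finset.sum_range_succ' f (j+1)]
        ring
      rw [e2, Finset.sum_range_succ]
      have : f (j+1) = 0 := by
        simp only [hf, stirlingFst_eq_zero (show j < j+1 by omega)]
        simp
      rw [this]
      have : f 0 = (stirlingFst j 0 : ℝ) * (-1)^j := by simp [hf, mul_comm]
      rw [this]
      ring
    have hj0 : (j : ℝ) * (stirlingFst j 0 : ℝ) = 0 := by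
      rcases j with _ | j
      · simp
      · simp [stirlingFst_succ_zero]
    rw [Finset.sum_range_succ'
      (fun i => (-1:ℝ)^(j+1) * (-1)^i * (stirlingFst (j+1) i : ℝ) * x^i) (j+1)]
    simp only [stirlingFst_succ_succ, stirlingFst_succ_zero]
    have expand : ∀ i ∈ range (j+1),
        (-1:ℝ)^(j+1) * (-1)^(i+1) * ((stirlingFst j i + j * stirlingFst j (i+1) : ℕ) : ℝ) * x^(i+1)
          = f i * x + (j : ℝ) * ((-1:ℝ)^j * (-1)^i * (stirlingFst j (i+1) : ℝ) * x^(i+1)) := by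
      intro i _
      simp only [hf]
      push_cast
      ring
    rw [Finset.sum_congr rfl expand, Finset.sum_add_distrib, ← Finset.mul_sum, key,
      ← Finset.sum_mul]
    push_cast
    linear_combination (-(-1:ℝ)^j) * hj0

lemma descFactorial_mul_choose : ∀ (j : ℕ) {k : ℕ} (w : ℕ), j ≤ k →
    k.descFactorial j * w.choose k = w.descFactorial j * (w - j).choose (k - j)
  | 0, k, w, _ => by simp
  | (j+1), k, w, h => by
    have hjk : j ≤ k := by omega
    rw [Nat.descFactorial_succ, Nat.mul_assoc, descFactorial_mul_choose j w hjk,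
      Nat.descFactorial_succ]
    rcases lt_or_ge j w with hjw | hjw
    · -- use absorption: (w-j) * C(w-j-1, k-j-1) = C(w-j, k-j) * (k-j)
      have habs := Nat.add_one_mul_choose_eq (w - j - 1) (k - j - 1)
      have e1 : w - j - 1 + 1 = w - j := by omega
      have e2 : k - j - 1 + 1 = k - j := by omega
      rw [e1, e2] at habs
      have e3 : k - (j+1) = k - j - 1 := by omega
      have e4 : w - (j+1) = w - j - 1 := by omega
      rw [e3, e4]
      calc (k - j) * (w.descFactorial j * (w - j).choose (k - j))
          = w.descFactorial j * ((w - j) * (w - j - 1).choose (k - j - 1)) := by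
            rw [habs]; ring
        _ = (w - j) * w.descFactorial j * (w - j - 1).choose (k - j - 1) := by ring
    · -- w ≤ j : both sides vanish
      rcases Nat.lt_or_ge w j with h' | h'
      · rw [Nat.descFactorial_eq_zero_iff_lt.mpr h']
        simp
      · have hwj : w = j := by omega
        subst hwj
        have : (w - w).choose (k - w) = 0 := by
          rw [Nat.sub_self]
          exact Nat.choose_eq_zero_of_lt (by omega)
        rw [this]
        simp

lemma key_sum (τ w m j : ℕ) (hw : w ≤ τ) (hjm : j ≤ m) :
    ∑ k ∈ range (m+1), k.descFactorial j * (w.choose k * (τ - w).choose (m - k))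
      = w.descFactorial j * (τ - j).choose (m - j) := by
  rcases Nat.lt_or_ge w j with hwj | hwj
  · -- w < j : everything is 0
    rw [Nat.descFactorial_eq_zero_iff_lt.mpr hwj, Nat.zero_mul]
    apply Finset.sum_eq_zero
    intro k _
    rcases Nat.lt_or_ge k j with hk | hk
    · rw [Nat.descFactorial_eq_zero_iff_lt.mpr hk, Nat.zero_mul]
    · rw [Nat.choose_eq_zero_of_lt (by omega), Nat.zero_mul, Nat.mul_zero]
  · -- j ≤ w
    have hsub : Ico j (m+1) ⊆ range (m+1) := by
      intro k hk
      rw [Finset.mem_range]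
      exact (Finset.mem_Ico.mp hk).2
    rw [← Finset.sum_subset hsub (by
      intro k hkmem hk
      rw [Finset.mem_range] at hkmem
      rw [Finset.mem_Ico] at hk
      have : k < j := by omega
      rw [Nat.descFactorial_eq_zero_iff_lt.mpr this, Nat.zero_mul])]
    rw [Finset.sum_Ico_eq_sum_range]
    have hm1 : m + 1 - j = (m - j) + 1 := by omega
    rw [hm1]
    have hterm : ∀ k ∈ range (m - j + 1),
        (j + k).descFactorial j * (w.choose (j + k) * (τ - w).choose (m - (j + k)))
          = w.descFactorial j * ((w - j).choose k * (τ - w).choose (m - j - k)) := by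
      intro k hk
      have h1 := descFactorial_mul_choose j w (show j ≤ j + k by omega)
      have e1 : j + k - j = k := by omega
      rw [e1] at h1
      have e2 : m - (j + k) = m - j - k := by omega
      rw [e2, ← Nat.mul_assoc, h1]
      ring
    rw [Finset.sum_congr rfl hterm, ← Finset.mul_sum]
    congr 1
    -- Vandermonde
    have hv := Nat.add_choose_eq (w - j) (τ - w) (m - j)
    have e3 : w - j + (τ - w) = τ - j := by omega
    rw [e3] at hv
    rw [hv, Finset.Nat.sum_antidiagonal_eq_sum_range_succ_mk]

lemma choose_subset_identity (τ m j : ℕ) (hjm : j ≤ m) :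
    m.choose j * τ.choose m = τ.choose j * (τ - j).choose (m - j) := by
  have h := descFactorial_mul_choose j τ hjm
  have h1 := Nat.descFactorial_eq_factorial_mul_choose m j
  have h2 := Nat.descFactorial_eq_factorial_mul_choose τ j
  rw [h1, h2] at h
  have : Nat.factorial j * (m.choose j * τ.choose m) = Nat.factorial j * (τ.choose j * (τ - j).choose (m - j)) := by
    rw [← Nat.mul_assoc, ← Nat.mul_assoc]; exact h
  exact Nat.eq_of_mul_eq_mul_left (Nat.factorial_pos j) this

lemma neg_pow_sub {i j : ℕ} (h : i ≤ j) : (-1:ℝ)^(j-i) = (-1)^j * (-1)^i := by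
  have h1 : (-1:ℝ)^j = (-1)^(j-i) * (-1)^i := by
    rw [← pow_add]
    congr 1
    omega
  have h2 : (-1:ℝ)^i * (-1)^i = 1 := by
    rw [← pow_add]
    exact Even.neg_one_pow ⟨i, rfl⟩
  calc (-1:ℝ)^(j-i) = (-1:ℝ)^(j-i) * ((-1)^i * (-1)^i) := by rw [h2, mul_one]
    _ = (-1)^j * (-1)^i := by rw [h1]; ring


/-- The `ℓ`-th moment of the hypergeometric distribution as a polynomial in `w`:
`E[X^ℓ] = Σ_{i=0}^{ℓ*} w^i Σ_{j=i}^{ℓ*} (-1)^{j-i} s(j,i) S(ℓ,j) C(m,j) / C(τ,j)`,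
with `ℓ* = min(ℓ, m)`. -/
theorem hypergeometric_moments (τ w m ℓ : ℕ) (hm : 1 ≤ m) (hmτ : m ≤ τ) (hw : w ≤ τ) :
    ∑ k ∈ range (m + 1),
        (k : ℝ) ^ ℓ * ((Nat.choose w k : ℝ) * (Nat.choose (τ - w) (m - k))
          / (Nat.choose τ m))
      = ∑ i ∈ range (min ℓ m + 1), (w : ℝ) ^ i *
          ∑ j ∈ Icc i (min ℓ m), (-1 : ℝ) ^ (j - i) *
            (stirlingFst j i : ℝ) * (stirlingSnd ℓ j : ℝ) * (Nat.choose m j : ℝ)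
              / (Nat.choose τ j : ℝ) := by
  set L := min ℓ m with hL
  have hLl : L ≤ ℓ := Nat.min_le_left _ _
  have hLm : L ≤ m := Nat.min_le_right _ _
  have hCm : ((τ.choose m : ℕ) : ℝ) ≠ 0 :=
    Nat.cast_ne_zero.mpr (Nat.choose_pos hmτ).ne'
  calc
    ∑ k ∈ range (m + 1), (k : ℝ) ^ ℓ *
        ((w.choose k : ℝ) * ((τ - w).choose (m - k)) / (τ.choose m))
      = ∑ k ∈ range (m + 1), ∑ j ∈ range (ℓ + 1),
          (stirlingSnd ℓ j : ℝ) * (k.descFactorial j : ℝ) *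
            ((w.choose k : ℝ) * ((τ - w).choose (m - k)) / (τ.choose m)) := by
        refine Finset.sum_congr rfl fun k _ => ?_
        rw [← Finset.sum_mul]
        congr 1
        exact_mod_cast pow_eq_sum_stirlingSnd ℓ k
    _ = ∑ j ∈ range (ℓ + 1), ∑ k ∈ range (m + 1),
          (stirlingSnd ℓ j : ℝ) * (k.descFactorial j : ℝ) *
            ((w.choose k : ℝ) * ((τ - w).choose (m - k)) / (τ.choose m)) :=
        Finset.sum_comm
    _ = ∑ j ∈ range (L + 1), ∑ k ∈ range (m + 1),
          (stirlingSnd ℓ j : ℝ) * (k.descFactorial j : ℝ) *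
            ((w.choose k : ℝ) * ((τ - w).choose (m - k)) / (τ.choose m)) := by
        symm
        apply Finset.sum_subset
        · exact Finset.range_subset_range.mpr (by omega)
        · intro j hj hj2
          rw [Finset.mem_range] at hj hj2
          apply Finset.sum_eq_zero
          intro k hk
          rw [Finset.mem_range] at hk
          have : k < j := by omega
          rw [Nat.descFactorial_eq_zero_iff_lt.mpr this]
          simp
    _ = ∑ j ∈ range (L + 1), (stirlingSnd ℓ j : ℝ) *
          ((w.descFactorial j : ℝ) * (m.choose j : ℝ) / (τ.choose j : ℝ)) := by
        refine Finset.sum_congr rfl fun j hj => ?_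
        rw [Finset.mem_range] at hj
        have hjm : j ≤ m := by omega
        have hCj : ((τ.choose j : ℕ) : ℝ) ≠ 0 :=
          Nat.cast_ne_zero.mpr (Nat.choose_pos (by omega)).ne'
        have hpull : ∑ k ∈ range (m + 1),
            (stirlingSnd ℓ j : ℝ) * (k.descFactorial j : ℝ) *
              ((w.choose k : ℝ) * ((τ - w).choose (m - k)) / (τ.choose m))
            = (stirlingSnd ℓ j : ℝ) *
              ((∑ k ∈ range (m + 1),
                ((k.descFactorial j * (w.choose k * (τ - w).choose (m - k)) : ℕ) : ℝ))
                  / (τ.choose m)) := by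
          rw [Finset.sum_div, Finset.mul_sum]
          refine Finset.sum_congr rfl fun k _ => ?_
          push_cast
          ring
        rw [hpull]
        rw [show ∑ k ∈ range (m + 1),
              ((k.descFactorial j * (w.choose k * (τ - w).choose (m - k)) : ℕ) : ℝ)
            = ((w.descFactorial j * (τ - j).choose (m - j) : ℕ) : ℝ) by
          rw [← Nat.cast_sum]
          exact_mod_cast congrArg (Nat.cast : ℕ → ℝ) (key_sum τ w m j hw hjm)]
        congr 1
        rw [div_eq_div_iff hCm hCj]
        have hid := congrArg (Nat.cast : ℕ → ℝ) (choose_subset_identity τ m j hjm)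
        push_cast at hid ⊢
        linear_combination (-(w.descFactorial j : ℝ)) * hid
    _ = ∑ j ∈ range (L + 1), ∑ i ∈ range (L + 1),
          (w : ℝ) ^ i * ((-1:ℝ)^j * (-1)^i * (stirlingFst j i : ℝ) *
            (stirlingSnd ℓ j : ℝ) * (m.choose j : ℝ) / (τ.choose j : ℝ)) := by
        refine Finset.sum_congr rfl fun j hj => ?_
        rw [Finset.mem_range] at hj
        have hpad : (w.descFactorial j : ℝ)
            = ∑ i ∈ range (L + 1), (-1:ℝ)^j * (-1)^i * (stirlingFst j i : ℝ) * (w:ℝ)^i := by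
          rw [← descPochhammer_eval_eq_descFactorial ℝ w j, descPoch_eval_sum]
          apply Finset.sum_subset (Finset.range_subset_range.mpr (by omega))
          intro i hi hi2
          rw [Finset.mem_range] at hi hi2
          rw [stirlingFst_eq_zero (show j < i by omega)]
          simp
        rw [hpad, Finset.sum_mul, Finset.sum_div, Finset.mul_sum]
        exact Finset.sum_congr rfl fun i _ => by ring
    _ = ∑ i ∈ range (L + 1), ∑ j ∈ range (L + 1),
          (w : ℝ) ^ i * ((-1:ℝ)^j * (-1)^i * (stirlingFst j i : ℝ) *
            (stirlingSnd ℓ j : ℝ) * (m.choose j : ℝ) / (τ.choose j : ℝ)) :=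
        Finset.sum_comm
    _ = ∑ i ∈ range (L + 1), (w : ℝ) ^ i *
          ∑ j ∈ Icc i L, (-1 : ℝ) ^ (j - i) *
            (stirlingFst j i : ℝ) * (stirlingSnd ℓ j : ℝ) * (m.choose j : ℝ)
              / (τ.choose j : ℝ) := by
        refine Finset.sum_congr rfl fun i hi => ?_
        rw [Finset.mem_range] at hi
        rw [Finset.mul_sum]
        have hstep1 : ∑ j ∈ range (L + 1),
            (w : ℝ) ^ i * ((-1:ℝ)^j * (-1)^i * (stirlingFst j i : ℝ) *
              (stirlingSnd ℓ j : ℝ) * (m.choose j : ℝ) / (τ.choose j : ℝ))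
            = ∑ j ∈ Icc i L,
            (w : ℝ) ^ i * ((-1:ℝ)^j * (-1)^i * (stirlingFst j i : ℝ) *
              (stirlingSnd ℓ j : ℝ) * (m.choose j : ℝ) / (τ.choose j : ℝ)) := by
          symm
          apply Finset.sum_subset
          · intro j hj
            rw [Finset.mem_Icc] at hj
            rw [Finset.mem_range]
            omega
          · intro j hj hj2
            rw [Finset.mem_range] at hj
            rw [Finset.mem_Icc] at hj2
            rw [stirlingFst_eq_zero (show j < i by omega)]
            simp
        rw [hstep1]
        refine Finset.sum_congr rfl fun j hj => ?_
        rw [Finset.mem_Icc] at hj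
        rw [neg_pow_sub hj.1]
end

section
/- With g_n = ∏_{j=0}^{n-1} T_j/(T_j + σΛ) and T_j = T_0 + σj, the asymptotic expansion g_n = (Γ(T_0/σ + Λ)/Γ(T_0/σ)) · n^{-Λ} · (1 + O(1/n)) holds as n → ∞; in particular n^Λ · g_n → Γ(T_0/σ + Λ)/Γ(T_0/σ). -/
set_option maxHeartbeats 1000000

open Finset Filter Asymptotics Topology


lemma log_one_sub_bound {t : ℝ} (ht : |t| ≤ 1/2) : |Real.log (1 - t) + t| ≤ 2 * t^2 := by
  have h1 : |t| < 1 := lt_of_le_of_lt ht (by norm_num)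
  have h2 := Real.abs_log_sub_add_sum_range_le h1 1
  simp only [Finset.range_one, Finset.sum_singleton, pow_one, Nat.cast_zero, zero_add,
    div_one] at h2
  have h3 : |t| ^ 2 / (1 - |t|) ≤ 2 * t ^ 2 := by
    rw [div_le_iff₀ (by linarith)]
    nlinarith [sq_abs t, sq_nonneg t, abs_nonneg t]
  calc |Real.log (1 - t) + t| = |t + Real.log (1 - t)| := by rw [add_comm]
    _ ≤ |t| ^ 2 / (1 - |t|) := h2
    _ ≤ 2 * t ^ 2 := h3

lemma dk_bound (a b : ℝ) (ha : 0 < a) (hb : 0 < b) (x : ℝ)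
    (hx2 : 2 ≤ x) (hxb : 2 * |b - a| ≤ x)
    (hxK : 2 * |b - a| + 2*(b-a)^2 + |b - a| * b ≤ x) :
    |((x+1)/x) ^ (b-a) * ((a + x)/(b + x)) - 1|
      ≤ 2*(2 * |b - a| + 2*(b-a)^2 + |b - a| * b) / x^2 := by
  have hx0 : (0:ℝ) < x := by linarith
  set K₁ := 2 * |b - a| + 2*(b-a)^2 + |b - a| * b with hK₁def
  clear_value K₁
  have hK₁0 : 0 ≤ K₁ := by rw [hK₁def]; positivity
  set y := (b-a)/(b+x) with hy
  clear_value y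
  have hbx : 0 < b + x := by linarith
  have hyabs : |y| ≤ |b - a|/x := by
    rw [hy, abs_div, abs_of_pos hbx]
    exact div_le_div_of_nonneg_left (abs_nonneg _) hx0 (by linarith)
  have hyhalf : |y| ≤ 1/2 := by
    refine hyabs.trans ?_
    rw [div_le_iff₀ hx0]; linarith
  -- second log bound
  have h1my : 1 - y = (a+x)/(b+x) := by rw [hy]; field_simp; ring
  have hlog2 : |Real.log ((a+x)/(b+x)) + y| ≤ 2 * y^2 := by
    rw [← h1my]; exact log_one_sub_bound hyhalf
  -- first log bound
  have hinvhalf : |(-(1/x))| ≤ 1/2 := by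
    rw [abs_neg, abs_of_pos (by positivity)]
    exact (one_div_le_one_div_of_le (by norm_num) hx2)
  have h1mt : 1 - (-(1/x)) = (x+1)/x := by rw [sub_neg_eq_add]; field_simp
  have hlog1 : |Real.log ((x+1)/x) - 1/x| ≤ 2 * (1/x)^2 := by
    have := log_one_sub_bound hinvhalf
    rw [h1mt] at this
    calc |Real.log ((x+1)/x) - 1/x| = |Real.log ((x+1)/x) + (-(1/x))| := by ring_nf
      _ ≤ 2 * (-(1/x))^2 := this
      _ = 2 * (1/x)^2 := by ring
  -- the linear-term discrepancy
  have hlin : |(b-a)/x - y| ≤ |b - a| * b / x^2 := by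
    have heq : (b-a)/x - y = (b-a) * (b / (x * (b+x))) := by
      rw [hy]; field_simp; ring
    rw [heq, abs_mul, abs_of_pos (by positivity : (0:ℝ) < b / (x * (b+x)))]
    have : b / (x * (b+x)) ≤ b / x^2 := by
      apply div_le_div_of_nonneg_left hb.le (by positivity)
      nlinarith
    calc |b-a| * (b / (x * (b+x))) ≤ |b-a| * (b / x^2) :=
          mul_le_mul_of_nonneg_left this (abs_nonneg _)
      _ = |b - a| * b / x^2 := by ring
  set L := (b-a) * Real.log ((x+1)/x) + Real.log ((a+x)/(b+x)) with hL
  clear_value L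
  have hLdecomp : L = (b-a) * (Real.log ((x+1)/x) - 1/x)
      + (Real.log ((a+x)/(b+x)) + y) + ((b-a)/x - y) := by rw [hL]; ring
  have hy2 : y^2 ≤ (b-a)^2 / x^2 := by
    have := hyabs
    have h' : |y|^2 ≤ (|b - a|/x)^2 := by
      apply pow_le_pow_left₀ (abs_nonneg _) this
    rw [sq_abs] at h'
    calc y^2 ≤ (|b - a|/x)^2 := h'
      _ = (b-a)^2 / x^2 := by rw [div_pow, sq_abs]
  have hLbound : |L| ≤ K₁ / x^2 := by
    rw [hLdecomp]
    calc |(b-a) * (Real.log ((x+1)/x) - 1/x) + (Real.log ((a+x)/(b+x)) + y) + ((b-a)/x - y)|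
        ≤ |(b-a) * (Real.log ((x+1)/x) - 1/x)| + |Real.log ((a+x)/(b+x)) + y| + |(b-a)/x - y| :=
          abs_add_three _ _ _
      _ ≤ |b-a| * (2 * (1/x)^2) + 2 * y^2 + |b - a| * b / x^2 := by
          gcongr
          · rw [abs_mul]; exact mul_le_mul_of_nonneg_left hlog1 (abs_nonneg _)
      _ ≤ |b-a| * (2 * (1/x)^2) + 2 * ((b-a)^2/x^2) + |b - a| * b / x^2 := by linarith
      _ = K₁ / x^2 := by rw [hK₁def]; field_simp
  have hL1 : |L| ≤ 1 := by
    refine hLbound.trans ?_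
    rw [div_le_one (by positivity)]
    nlinarith
  have hd : ((x+1)/x) ^ (b-a) * ((a + x)/(b + x)) = Real.exp L := by
    rw [Real.rpow_def_of_pos (by positivity),
      ← Real.exp_log (show (0:ℝ) < (a+x)/(b+x) by positivity), ← Real.exp_add]
    congr 1; rw [hL]; ring
  rw [hd]
  have hexp := Real.abs_exp_sub_one_sub_id_le hL1
  have : |Real.exp L - 1| ≤ L^2 + |L| := by
    calc |Real.exp L - 1| = |(Real.exp L - 1 - L) + L| := by congr 1; ring
      _ ≤ |Real.exp L - 1 - L| + |L| := abs_add_le _ _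
      _ ≤ L^2 + |L| := by linarith
  have hsq : L^2 ≤ |L| := by nlinarith [sq_abs L, abs_nonneg L]
  calc |Real.exp L - 1| ≤ L^2 + |L| := this
    _ ≤ 2 * |L| := by linarith
    _ ≤ 2 * (K₁ / x^2) := mul_le_mul_of_nonneg_left hLbound (by norm_num)
    _ = 2 * K₁ / x^2 := by ring

private lemma ratio_main (a b : ℝ) (ha : 0 < a) (hb : 0 < b) :
    Tendsto (fun n : ℕ => (n:ℝ) ^ (b-a) * ∏ j ∈ range n, (a + j) / (b + j)) atTop
      (𝓝 (Real.Gamma b / Real.Gamma a)) ∧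
    ∃ K, 0 ≤ K ∧ ∀ᶠ n : ℕ in atTop,
      |(n:ℝ) ^ (b-a) * ∏ j ∈ range n, (a + j) / (b + j) - Real.Gamma b / Real.Gamma a|
        ≤ K / n := by
  set f : ℕ → ℝ := fun n => (n:ℝ) ^ (b-a) * ∏ j ∈ range n, (a + j) / (b + j) with hf
  set C := Real.Gamma b / Real.Gamma a with hC
  -- Part 1 : the limit
  have hΓa : Real.Gamma a ≠ 0 := (Real.Gamma_pos_of_pos ha).ne'
  have hratio : Tendsto (fun n => Real.GammaSeq b n / Real.GammaSeq a n) atTop (𝓝 C) :=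
    (Real.GammaSeq_tendsto_Gamma b).div (Real.GammaSeq_tendsto_Gamma a) hΓa
  have hquot : Tendsto (fun n : ℕ => (((n:ℝ)+1)/n)) atTop (𝓝 1) := by
    have h0 : Tendsto (fun n : ℕ => 1 + 1/(n:ℝ)) atTop (𝓝 (1 + 0)) :=
      tendsto_const_nhds.add tendsto_one_div_atTop_nhds_zero_nat
    rw [add_zero] at h0
    apply h0.congr'
    filter_upwards [eventually_ge_atTop 1] with n hn
    have hn0 : (0:ℝ) < n := by exact_mod_cast hn
    field_simp
  have hrpow : Tendsto (fun n : ℕ => (((n:ℝ)+1)/n) ^ (b-a)) atTop (𝓝 1) := by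
    have := hquot.rpow_const (p := b - a) (Or.inl one_ne_zero)
    simpa using this
  have hiden : ∀ n : ℕ, 1 ≤ n →
      f (n+1) = (((n:ℝ)+1)/n) ^ (b-a) * (Real.GammaSeq b n / Real.GammaSeq a n) := by
    intro n hn
    have hn0 : (0:ℝ) < n := by exact_mod_cast hn
    have hA : (0:ℝ) < ∏ j ∈ range (n+1), (a + j) := by
      apply Finset.prod_pos; intro j _; positivity
    have hB : (0:ℝ) < ∏ j ∈ range (n+1), (b + j) := by
      apply Finset.prod_pos; intro j _; positivity
    have hfac : (0:ℝ) < (n.factorial : ℝ) := by positivity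
    simp only [hf]
    push_cast
    rw [Real.GammaSeq, Real.GammaSeq, Finset.prod_div_distrib,
      Real.div_rpow (by positivity) hn0.le, Real.rpow_sub hn0,
      Real.rpow_sub (by positivity : (0:ℝ) < (n:ℝ)+1)]
    field_simp
  have hshift : Tendsto (fun n => f (n+1)) atTop (𝓝 C) := by
    have hmul := hrpow.mul hratio
    rw [one_mul] at hmul
    apply hmul.congr'
    filter_upwards [eventually_ge_atTop 1] with n hn
    exact (hiden n hn).symm
  have hlim : Tendsto f atTop (𝓝 C) := by
    rwa [← tendsto_add_atTop_iff_nat 1]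
  refine ⟨hlim, ?_⟩
  -- Part 2 : the rate
  set K₁ := 2 * |b - a| + 2*(b-a)^2 + |b - a| * b with hK₁def
  have hK₁0 : 0 ≤ K₁ := by rw [hK₁def]; positivity
  have hbdd : ∀ᶠ k : ℕ in atTop, |f k| ≤ |C| + 1 := by
    have habs : Tendsto (fun k => |f k|) atTop (𝓝 |C|) := hlim.abs
    exact habs.eventually_le_const (by linarith [abs_nonneg C])
  set M := (|C|+1) * (2*K₁) with hM
  have hM0 : 0 ≤ M := by rw [hM]; positivity
  have hrec : ∀ k : ℕ, 1 ≤ k →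
      f (k+1) = f k * ((((k:ℝ)+1)/k) ^ (b-a) * ((a + k)/(b + k))) := by
    intro k hk
    have hk0 : (0:ℝ) < k := by exact_mod_cast hk
    simp only [hf]
    push_cast
    rw [Finset.prod_range_succ, Real.div_rpow (by positivity) hk0.le]
    have h1 : ((k:ℝ)) ^ (b-a) ≠ 0 := by positivity
    field_simp
  have hstep : ∀ᶠ k : ℕ in atTop, |f (k+1) - f k| ≤ M / (k:ℝ)^2 := by
    have hc : Tendsto (fun k : ℕ => (k:ℝ)) atTop atTop := tendsto_natCast_atTop_atTop
    filter_upwards [hbdd, eventually_ge_atTop 1, hc.eventually_ge_atTop 2,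
      hc.eventually_ge_atTop (2 * |b - a|), hc.eventually_ge_atTop K₁]
      with k hkb hk1 hk2 hkba hkK
    have hd := dk_bound a b ha hb (k:ℝ) hk2 hkba (by rw [← hK₁def]; exact hkK)
    rw [hrec k hk1]
    have : f k * ((((k:ℝ)+1)/k) ^ (b-a) * ((a + k)/(b + k))) - f k
        = f k * ((((k:ℝ)+1)/k) ^ (b-a) * ((a + k)/(b + k)) - 1) := by ring
    rw [this, abs_mul]
    calc |f k| * |(((k:ℝ)+1)/k) ^ (b-a) * ((a + k)/(b + k)) - 1|
        ≤ (|C|+1) * (2 * K₁ / (k:ℝ)^2) := by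
          apply mul_le_mul hkb (by rw [hK₁def]; exact hd) (abs_nonneg _) (by linarith [abs_nonneg C])
      _ = M / (k:ℝ)^2 := by rw [hM]; ring
  obtain ⟨N, hN⟩ := eventually_atTop.mp hstep
  have key : ∀ n, max N 2 ≤ n → ∀ m : ℕ,
      |f (n+m) - f n| ≤ M * (1/((n:ℝ)-1) - 1/((n:ℝ)+(m:ℝ)-1)) := by
    intro n hn m
    have hnN : N ≤ n := le_trans (le_max_left _ _) hn
    have hn2 : 2 ≤ n := le_trans (le_max_right _ _) hn
    have hn2R : (2:ℝ) ≤ n := by exact_mod_cast hn2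
    induction m with
    | zero => simp
    | succ m ih =>
      have hz2 : (2:ℝ) ≤ (n:ℝ) + m := by
        have : (0:ℝ) ≤ m := by positivity
        linarith
      have hstep' : |f ((n+m)+1) - f (n+m)| ≤ M / ((n:ℝ)+m)^2 := by
        have := hN (n+m) (le_trans hnN (Nat.le_add_right n m))
        rwa [Nat.cast_add] at this
      have hgap : M / ((n:ℝ)+m)^2 ≤ M * (1/((n:ℝ)+m-1) - 1/((n:ℝ)+m)) := by
        have h1 : (0:ℝ) < (n:ℝ)+m-1 := by linarith
        have h2 : (0:ℝ) < (n:ℝ)+m := by linarith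
        have heq : 1/((n:ℝ)+m-1) - 1/((n:ℝ)+m) = 1/(((n:ℝ)+m-1)*((n:ℝ)+m)) := by
          field_simp
          ring
        rw [heq, div_eq_mul_one_div M]
        apply mul_le_mul_of_nonneg_left _ hM0
        apply one_div_le_one_div_of_le (by positivity)
        nlinarith
      calc |f (n+(m+1)) - f n|
          = |(f ((n+m)+1) - f (n+m)) + (f (n+m) - f n)| := by
            rw [show n+(m+1) = (n+m)+1 from rfl,
              show f ((n+m)+1) - f n = (f ((n+m)+1) - f (n+m)) + (f (n+m) - f n) from by ring]
        _ ≤ |f ((n+m)+1) - f (n+m)| + |f (n+m) - f n| := abs_add_le _ _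
        _ ≤ M / ((n:ℝ)+m)^2 + M * (1/((n:ℝ)-1) - 1/((n:ℝ)+(m:ℝ)-1)) := by
            exact add_le_add hstep' ih
        _ ≤ M * (1/((n:ℝ)+m-1) - 1/((n:ℝ)+m)) + M * (1/((n:ℝ)-1) - 1/((n:ℝ)+(m:ℝ)-1)) := by
            linarith
        _ = M * (1/((n:ℝ)-1) - 1/((n:ℝ)+((m:ℝ)+1)-1)) := by ring
        _ = M * (1/((n:ℝ)-1) - 1/((n:ℝ)+((m+1:ℕ):ℝ)-1)) := by push_cast; ring
  have hfinal : ∀ n, max N 2 ≤ n → |f n - C| ≤ 2 * M / n := by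
    intro n hn
    have hn2 : 2 ≤ n := le_trans (le_max_right _ _) hn
    have hn2R : (2:ℝ) ≤ n := by exact_mod_cast hn2
    have hlimm : Tendsto (fun m : ℕ => |f (n+m) - f n|) atTop (𝓝 |C - f n|) := by
      have h1 : Tendsto (fun m : ℕ => f (n+m)) atTop (𝓝 C) := by
        have := hlim.comp (tendsto_add_atTop_nat n)
        simpa [Function.comp_def, add_comm] using this
      exact ((h1.sub tendsto_const_nhds).abs)
    have hb1 : |C - f n| ≤ M * (1/((n:ℝ)-1)) := by
      apply le_of_tendsto hlimm
      filter_upwards with m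
      refine (key n hn m).trans ?_
      have : (0:ℝ) ≤ 1/((n:ℝ)+(m:ℝ)-1) := by
        apply one_div_nonneg.mpr
        have : (0:ℝ) ≤ m := by positivity
        linarith
      nlinarith
    have : |f n - C| ≤ M * (1/((n:ℝ)-1)) := by rwa [abs_sub_comm]
    refine this.trans ?_
    rw [mul_one_div, div_le_div_iff₀ (by linarith) (by linarith)]
    nlinarith
  exact ⟨2*M, by positivity, eventually_atTop.mpr ⟨max N 2, hfinal⟩⟩

/-- Asymptotics of `g_n = ∏_{j<n} T_j/(T_j + σΛ)`:
`g_n = (Γ(T_0/σ+Λ)/Γ(T_0/σ)) n^{-Λ} (1 + O(1/n))`; in particular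
`n^Λ g_n → Γ(T_0/σ+Λ)/Γ(T_0/σ)`. -/
theorem g_n_asymptotics (σ T0 Λ : ℝ) (hσ : 0 < σ) (hT0 : 0 < T0)
    (h : 0 < T0 / σ + Λ)
    (g : ℕ → ℝ)
    (hg : ∀ n, g n = ∏ j ∈ range n, (T0 + σ * j) / (T0 + σ * j + σ * Λ)) :
    Tendsto (fun n : ℕ => (n : ℝ) ^ Λ * g n) atTop
        (𝓝 (Real.Gamma (T0 / σ + Λ) / Real.Gamma (T0 / σ))) ∧
      (fun n : ℕ => (n : ℝ) ^ Λ * g n - Real.Gamma (T0 / σ + Λ) / Real.Gamma (T0 / σ))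
        =O[atTop] fun n : ℕ => 1 / (n : ℝ) := by
  have ha : 0 < T0 / σ := div_pos hT0 hσ
  obtain ⟨hlim, K, hK0, hK⟩ := ratio_main (T0/σ) (T0/σ + Λ) ha h
  have hgeq : ∀ n : ℕ, (n:ℝ) ^ Λ * g n
      = (n:ℝ) ^ (T0/σ + Λ - T0/σ) * ∏ j ∈ range n, (T0/σ + j) / (T0/σ + Λ + j) := by
    intro n
    rw [hg n, show T0/σ + Λ - T0/σ = Λ from by ring]
    congr 1
    apply Finset.prod_congr rfl
    intro j _
    have h1 : T0 + σ*j + σ*Λ = σ * (T0/σ + Λ + j) := by field_simp; ring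
    have h2 : T0 + σ*j = σ * (T0/σ + j) := by field_simp
    rw [h1, h2, mul_div_mul_left _ _ hσ.ne']
  constructor
  · exact Tendsto.congr (fun n => (hgeq n).symm) hlim
  · rw [isBigO_iff]
    refine ⟨K, ?_⟩
    filter_upwards [hK, eventually_ge_atTop 1] with n h1 h2
    have hn0 : (0:ℝ) < n := by exact_mod_cast h2
    rw [hgeq n, Real.norm_eq_abs, Real.norm_eq_abs,
      abs_of_nonneg (by positivity : (0:ℝ) ≤ 1/(n:ℝ))]
    calc _ ≤ K / (n:ℝ) := h1
      _ = K * (1/(n:ℝ)) := by ring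
end

section
/- For an affine urn with a_m ≠ 0 and Λ < 1, the expected value admits the closed form E[W_n] = a_m(n + T_0/σ)/(1−Λ) + (W_0 − a_m T_0/(σ(1−Λ))) · C(n−1+T_0/σ+Λ, n)/C(n−1+T_0/σ, n), where C denotes the generalized binomial coefficient. -/
open Finset MeasureTheory

/-- Generalized binomial coefficient `C(x, n) = x(x-1)⋯(x-n+1)/n!` for real `x`. -/
noncomputable def genBinom (x : ℝ) (n : ℕ) : ℝ :=
  (∏ i ∈ range n, (x - i)) / (Nat.factorial n)

lemma genBinom_shift (x : ℝ) (n : ℕ) :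
    genBinom ((n : ℝ) - 1 + x) n = (∏ j ∈ range n, (x + j)) / (Nat.factorial n) := by
  unfold genBinom
  congr 1
  rw [← Finset.prod_range_reflect (fun j => x + (j : ℝ)) n]
  refine Finset.prod_congr rfl fun i hi => ?_
  have hi' : i < n := Finset.mem_range.mp hi
  have : ((n - 1 - i : ℕ) : ℝ) = (n : ℝ) - 1 - i := by
    have : i ≤ n - 1 := by omega
    push_cast [Nat.cast_sub this, Nat.cast_sub (by omega : 1 ≤ n)]
    ring
  rw [this]; ring

/-- For an affine urn with `a_m ≠ 0` and `Λ < 1`: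
`E[W_n] = a_m(n+T_0/σ)/(1−Λ) + (W_0 − a_m T_0/(σ(1−Λ))) C(n−1+T_0/σ+Λ, n)/C(n−1+T_0/σ, n)`. -/
theorem affine_expected_value_closed_form {Ω : Type*} {m0 : MeasurableSpace Ω}
    {μ : Measure Ω} [IsProbabilityMeasure μ]
    (ℱ : Filtration ℕ m0) (W : ℕ → Ω → ℝ) (σ T0 Λ am w0 : ℝ)
    (hσ : 0 < σ) (hT0 : 0 < T0) (hΛ : Λ < 1) (ham : am ≠ 0)
    (hpos : ∀ j : ℕ, 0 < T0 + σ * j + σ * Λ)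
    (hadapted : Adapted ℱ W) (hint : ∀ n, Integrable (W n) μ)
    (hW0 : W 0 = fun _ => w0)
    (hcond : ∀ n : ℕ, μ[W (n + 1) | ℱ n]
      =ᵐ[μ] fun ω => (T0 + σ * n + σ * Λ) / (T0 + σ * n) * W n ω + am) :
    ∀ n : ℕ, ∫ x, W n x ∂μ
      = am * ((n : ℝ) + T0 / σ) / (1 - Λ)
        + (w0 - am * T0 / (σ * (1 - Λ)))
          * genBinom ((n : ℝ) - 1 + T0 / σ + Λ) n / genBinom ((n : ℝ) - 1 + T0 / σ) n := by
  set r : ℝ := T0 / σ with hr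
  have hrpos : 0 < r := div_pos hT0 hσ
  have h1Λ : (0:ℝ) < 1 - Λ := by linarith
  have hden : ∀ j : ℕ, (0:ℝ) < r + j := fun j => by positivity
  have hnum : ∀ j : ℕ, (0:ℝ) < r + Λ + j := by
    intro j
    have := hpos j
    have : 0 < (T0 + σ * j + σ * Λ) / σ := div_pos this hσ
    have heq : (T0 + σ * j + σ * Λ) / σ = r + Λ + j := by
      field_simp [hr]; rw [hr]; field_simp; ring
    linarith [heq ▸ this]
  -- rewrite the genBinom ratio as a product
  have hratio : ∀ n : ℕ,
      genBinom ((n : ℝ) - 1 + r + Λ) n / genBinom ((n : ℝ) - 1 + r) n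
        = ∏ j ∈ range n, ((r + Λ + j) / (r + j)) := by
    intro n
    have h1 : ((n : ℝ) - 1 + r + Λ) = (n : ℝ) - 1 + (r + Λ) := by ring
    rw [h1, genBinom_shift, genBinom_shift, div_div_div_comm, div_self
      (Nat.cast_ne_zero.mpr (Nat.factorial_ne_zero n)), div_one, ← Finset.prod_div_distrib]
  -- the recurrence for the integral
  have hrec : ∀ n : ℕ, ∫ x, W (n + 1) x ∂μ
      = (T0 + σ * n + σ * Λ) / (T0 + σ * n) * ∫ x, W n x ∂μ + am := by
    intro n
    have h1 : ∫ x, W (n + 1) x ∂μ = ∫ x, (μ[W (n + 1) | ℱ n]) x ∂μ :=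
      (integral_condExp (ℱ.le n)).symm
    rw [h1, integral_congr_ae (hcond n), integral_add ((hint n).const_mul _)
      (integrable_const am), integral_const_mul, integral_const, probReal_univ]
    simp
  -- main induction
  intro n
  induction n with
  | zero =>
    simp only [Nat.cast_zero, genBinom, range_zero, Finset.prod_empty, Nat.factorial_zero,
      Nat.cast_one, div_one]
    rw [hW0]
    rw [integral_const, probReal_univ]
    simp only [ENNReal.toReal_one, one_smul]
    have hrT : T0 = σ * r := by rw [hr]; field_simp
    rw [hrT]
    field_simp
    ring
  | succ n ih =>
    rw [hrec n, ih]
    simp only [mul_div_assoc]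
    rw [hratio n, hratio (n+1), Finset.prod_range_succ]
    push_cast
    have hTn : (0:ℝ) < T0 + σ * n := by positivity
    have hrn := hden n
    have hrT : T0 = σ * r := by rw [hr]; field_simp
    rw [hrT]
    field_simp
    ring
end

section
/- Let f_{j,s,s} = Σ_{ℓ=0}^{s} C(s,ℓ) C_0^ℓ C(m,ℓ) ℓ! / T_{j−1}^ℓ with T_j = T_0 + σj (model R). If μ_{1,s},…,μ_{s,s} are the negated roots of Q_s(x) = σ^{−s} Σ_{ℓ=0}^s C(s,ℓ) C_0^ℓ C(m,ℓ) ℓ! (xσ+T_0)^{s−ℓ}, then the sum Σ_{ℓ=1}^s μ_{ℓ,s} = sT_0/σ + Λs with Λ = C_0 m/σ, and consequently ∏_{j=1}^n f_{j,s,s} = n^{Λs} · Γ(T_0/σ)^s / ∏_{ℓ=1}^s Γ(μ_{ℓ,s}) · (1 + O(1/n)). -/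
open Finset Filter Asymptotics Topology

noncomputable def hfun (b : ℝ) (n : ℕ) : ℝ :=
  Real.Gamma (b + n) / (Real.Gamma n * (n:ℝ) ^ b)

lemma gamma_shift (b : ℝ) (hb : ∀ k : ℕ, b + k ≠ 0) (n : ℕ) :
    Real.Gamma (b + n) = Real.Gamma b * ∏ k ∈ range n, (b + k) := by
  induction n with
  | zero => simp
  | succ n ih =>
    have h1 : b + (n + 1 : ℕ) = (b + n) + 1 := by push_cast; ring
    rw [h1, Real.Gamma_add_one (hb n), ih, prod_range_succ]; ring

lemma log_one_add_bound {t : ℝ} (ht : |t| ≤ 1/2) : |Real.log (1+t) - t| ≤ 2 * t^2 := by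
  have h1 : (0:ℝ) < 1 + t := by
    rcases abs_le.1 ht with ⟨h, _⟩; linarith
  have hup : Real.log (1+t) ≤ t := by
    have := Real.log_le_sub_one_of_pos h1; linarith
  have hlo : t / (1+t) ≤ Real.log (1+t) := by
    have h2 : (0:ℝ) < 1/(1+t) := by positivity
    have := Real.log_le_sub_one_of_pos h2
    rw [Real.log_div one_ne_zero (ne_of_gt h1), Real.log_one] at this
    have : -Real.log (1+t) ≤ 1/(1+t) - 1 := by linarith
    have h3 : 1/(1+t) - 1 = -(t/(1+t)) := by field_simp; ring
    rw [h3] at this; linarith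
  rw [abs_le]
  constructor
  · have : t / (1+t) - t = -(t^2/(1+t)) := by field_simp; ring
    have h4 : t^2/(1+t) ≤ 2*t^2 := by
      rw [div_le_iff₀ h1]
      nlinarith [sq_nonneg t, abs_le.1 ht]
    linarith
  · linarith [sq_nonneg t]

lemma hfun_tendsto (b : ℝ) (hb : ∀ k : ℕ, b + k ≠ 0) :
    Tendsto (hfun b) atTop (𝓝 1) := by
  have hΓb : Real.Gamma b ≠ 0 := by
    apply Real.Gamma_ne_zero
    intro k hk
    exact hb k (by rw [hk]; ring)
  have key : ∀ n : ℕ, 1 ≤ n →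
      hfun b n = Real.Gamma b * ((n:ℝ)/(b+n)) / Real.GammaSeq b n := by
    intro n hn
    have hn0 : (0:ℝ) < n := by exact_mod_cast hn
    have hnne : (n:ℝ) ≠ 0 := hn0.ne'
    have hΓn : Real.Gamma n = (Nat.factorial (n-1) : ℝ) := by
      have h : ((n-1:ℕ):ℝ) + 1 = (n:ℝ) := by
        have := Nat.succ_pred_eq_of_pos hn
        exact_mod_cast congrArg (Nat.cast (R := ℝ)) this
      rw [← h, Real.Gamma_nat_eq_factorial]
    have hfact : ((Nat.factorial n : ℕ) : ℝ) = (Nat.factorial (n-1) : ℝ) * n := by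
      have h : n - 1 + 1 = n := Nat.succ_pred_eq_of_pos hn
      have h2 : (Nat.factorial n : ℝ) = ((n-1+1).factorial : ℝ) := by rw [h]
      rw [h2, Nat.factorial_succ]
      push_cast [h]
      ring
    rw [hfun, Real.GammaSeq, gamma_shift b hb n, hΓn, Finset.prod_range_succ]
    have h1 : (Nat.factorial (n-1) : ℝ) ≠ 0 := by exact_mod_cast (Nat.factorial_ne_zero _)
    have h2 : (n:ℝ) ^ b ≠ 0 := (Real.rpow_pos_of_pos hn0 b).ne'
    have hprodne : (∏ j ∈ range n, (b + (j:ℝ))) ≠ 0 :=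
      Finset.prod_ne_zero_iff.2 fun j _ => hb j
    field_simp
    rw [hfact]
    rw [eq_div_iff (by
      exact hb n)]
  have h1 : Tendsto (fun n : ℕ => Real.Gamma b * ((n:ℝ)/(b+n)) / Real.GammaSeq b n)
      atTop (𝓝 1) := by
    have ht : Tendsto (fun n : ℕ => (n:ℝ)/(b+n)) atTop (𝓝 1) := by
      have hb0 : Tendsto (fun n : ℕ => b / (n:ℝ)) atTop (𝓝 0) :=
        tendsto_const_div_atTop_nhds_zero_nat b
      have h3 : Tendsto (fun n : ℕ => 1 / (1 + b/(n:ℝ))) atTop (𝓝 (1/(1+0))) :=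
        Tendsto.div tendsto_const_nhds (tendsto_const_nhds.add hb0) (by norm_num)
      rw [show (1:ℝ)/(1+0) = 1 by norm_num] at h3
      apply h3.congr'
      filter_upwards [eventually_ge_atTop 1,
        hb0.eventually (Metric.ball_mem_nhds (0:ℝ) one_pos)] with n hn hball
      have hn0 : (n:ℝ) ≠ 0 := by positivity
      have hba : |b/(n:ℝ)| < 1 := by rw [Real.dist_eq, sub_zero] at hball; exact hball
      have hpos : (0:ℝ) < 1 + b/(n:ℝ) := by
        have := abs_lt.1 hba; linarith
      rw [div_eq_div_iff hpos.ne' (hb n)]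
      field_simp
      ring
    have h4 := (tendsto_const_nhds (x := Real.Gamma b)).mul ht
    have h2 := h4.div (Real.GammaSeq_tendsto_Gamma b) hΓb
    exact (by simpa [mul_one, div_self hΓb] using h2 : Tendsto ((fun x : ℕ => Real.Gamma b * ((x:ℝ)/(b+x))) / Real.GammaSeq b) atTop (𝓝 1))
  apply h1.congr'
  filter_upwards [eventually_ge_atTop 1] with n hn
  exact (key n hn).symm

lemma hfun_pos (b : ℝ) {n : ℕ} (hn : 2*|b| + 2 ≤ n) : 0 < hfun b n := by
  have h1 : (0:ℝ) < b + n := by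
    have := abs_nonneg b
    have hb := neg_abs_le b
    linarith
  have h2 : (0:ℝ) < n := by have := abs_nonneg b; linarith
  exact div_pos (Real.Gamma_pos_of_pos h1)
    (mul_pos (Real.Gamma_pos_of_pos h2) (Real.rpow_pos_of_pos h2 _))

lemma hfun_step (b : ℝ) {n : ℕ} (hn : 2*|b| + 2 ≤ n) :
    |Real.log (hfun b (n+1)) - Real.log (hfun b n)| ≤ (2*b^2 + 2*|b|) / n^2 := by
  have hnR : (2:ℝ)*|b| + 2 ≤ n := hn
  have h2 : (0:ℝ) < n := by have := abs_nonneg b; linarith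
  have h1 : (0:ℝ) < b + n := by have := neg_abs_le b; linarith
  have hs : 2*|b| + 2 ≤ ((n+1:ℕ):ℝ) := by push_cast; linarith
  have hratio : hfun b (n+1) = hfun b n * ((1 + b/n) * ((n:ℝ)/(n+1)) ^ b) := by
    have e1 : Real.Gamma (b + (n+1:ℕ)) = (b+n) * Real.Gamma (b + n) := by
      have : b + ((n+1:ℕ):ℝ) = (b + n) + 1 := by push_cast; ring
      rw [this, Real.Gamma_add_one h1.ne']
    have e2 : Real.Gamma ((n+1:ℕ):ℝ) = (n:ℝ) * Real.Gamma n := by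
      have : ((n+1:ℕ):ℝ) = (n:ℝ) + 1 := by push_cast; ring
      rw [this, Real.Gamma_add_one h2.ne']
    have e3 : ((n+1:ℕ):ℝ) ^ b = (n:ℝ)^b / ((n:ℝ)/(n+1))^b := by
      rw [Real.div_rpow (le_of_lt h2) (by positivity)]
      have hne : ((n:ℝ)+1) ^ b ≠ 0 := (Real.rpow_pos_of_pos (by linarith) b).ne'
      have hne2 : (n:ℝ) ^ b ≠ 0 := (Real.rpow_pos_of_pos h2 b).ne'
      push_cast
      field_simp
    rw [hfun, hfun, e1, e2, e3]
    have hΓn : Real.Gamma (n:ℝ) ≠ 0 := (Real.Gamma_pos_of_pos h2).ne'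
    have hnb : (n:ℝ)^b ≠ 0 := (Real.rpow_pos_of_pos h2 b).ne'
    have hq : ((n:ℝ)/(n+1))^b ≠ 0 := (Real.rpow_pos_of_pos (by positivity) b).ne'
    field_simp
    ring
  have hpos := hfun_pos b hn
  have hbn : (0:ℝ) < 1 + b/n := by
    have he : 1 + b/(n:ℝ) = ((n:ℝ) + b)/n := by field_simp
    rw [he]
    exact div_pos (by linarith [neg_abs_le b]) h2
  rw [hratio, Real.log_mul hpos.ne' (by positivity), Real.log_mul hbn.ne'
    (Real.rpow_pos_of_pos (by positivity) b).ne', Real.log_rpow (by positivity)]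
  have hlogq : Real.log ((n:ℝ)/(n+1)) = - Real.log (1 + 1/n) := by
    rw [← Real.log_inv]
    congr 1
    field_simp
  rw [hlogq]
  have e4 : Real.log (hfun b n) + (Real.log (1 + b/n) + b * -Real.log (1+1/n))
      - Real.log (hfun b n) = (Real.log (1 + b/n) - b/n) - b * (Real.log (1+1/n) - 1/n) := by
    ring
  rw [e4]
  have hb1 : |b/(n:ℝ)| ≤ 1/2 := by
    rw [abs_div, abs_of_pos h2, div_le_iff₀ h2]; linarith
  have hb2 : |1/(n:ℝ)| ≤ 1/2 := by
    rw [abs_of_pos (by positivity), div_le_iff₀ h2]; linarith [abs_nonneg b]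
  have t1 := log_one_add_bound hb1
  have t2 := log_one_add_bound hb2
  calc |(Real.log (1 + b/n) - b/n) - b * (Real.log (1+1/n) - 1/n)|
      ≤ |Real.log (1 + b/n) - b/n| + |b| * |Real.log (1+1/n) - 1/n| := by
        rw [← abs_mul]; exact abs_sub _ _
    _ ≤ 2*(b/n)^2 + |b| * (2*(1/n)^2) := by
        gcongr
    _ = (2*b^2 + 2*|b|) / n^2 := by
        field_simp

lemma hfun_log_bound (b : ℝ) (hb : ∀ k : ℕ, b + k ≠ 0) {n : ℕ} (hn : 2*|b| + 2 ≤ n) :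
    |Real.log (hfun b n)| ≤ (4*b^2 + 4*|b|) / n := by
  set K : ℝ := 2*b^2 + 2*|b| with hK
  have hK0 : 0 ≤ K := by positivity
  set L : ℕ → ℝ := fun k => Real.log (hfun b k) with hL
  have tel : ∀ N, n ≤ N → |L N - L n| ≤ 2*K*(1/n - 1/N) := by
    intro N hN
    induction N, hN using Nat.le_induction with
    | base => simp
    | succ N hN ih =>
      have hNR : (2:ℝ)*|b| + 2 ≤ N := le_trans hn (by exact_mod_cast hN)
      have hN2 : (2:ℝ) ≤ N := by linarith [abs_nonneg b]
      have hN0 : (0:ℝ) < N := by linarith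
      have step := hfun_step b hNR
      calc |L (N+1) - L n| ≤ |L (N+1) - L N| + |L N - L n| := by
            have : L (N+1) - L n = (L (N+1) - L N) + (L N - L n) := by ring
            rw [this]; exact abs_add_le _ _
        _ ≤ K/N^2 + 2*K*(1/n - 1/N) := by
            push_cast at step ⊢
            gcongr
        _ ≤ 2*K*(1/n - 1/((N:ℕ)+1:ℕ)) := by
            push_cast
            have key : K/(N:ℝ)^2 ≤ 2*K*(1/(N:ℝ) - 1/((N:ℝ)+1)) := by
              rw [div_le_iff₀ (by positivity)]
              have he : 2*K*(1/(N:ℝ) - 1/((N:ℝ)+1)) = 2*K/((N:ℝ)*((N:ℝ)+1)) := by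
                field_simp; ring
              rw [he, div_mul_eq_mul_div, le_div_iff₀ (by positivity)]
              nlinarith [mul_nonneg (mul_nonneg hK0 hN0.le) (by linarith : (0:ℝ) ≤ (N:ℝ) - 1)]
            linarith
  have hlim : Tendsto (fun N => |L N - L n|) atTop (𝓝 |0 - L n|) := by
    have h0 : Tendsto L atTop (𝓝 0) := by
      have := (Real.continuousAt_log one_ne_zero).tendsto.comp (hfun_tendsto b hb)
      rw [Real.log_one] at this; exact this
    exact ((h0.sub tendsto_const_nhds).abs)
  rw [zero_sub, abs_neg] at hlim
  have hfin : |L n| ≤ 2*K/n := by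
    apply le_of_tendsto hlim
    filter_upwards [eventually_ge_atTop n] with N hN
    have h1 := tel N hN
    have h2 : 2*K*(1/(n:ℝ) - 1/(N:ℝ)) ≤ 2*K/n := by
      have hp : (0:ℝ) ≤ 2*K*(1/(N:ℝ)) := by positivity
      have heq : 2*K*(1/(n:ℝ) - 1/(N:ℝ)) = 2*K/(n:ℝ) - 2*K*(1/(N:ℝ)) := by ring
      linarith
    linarith
  calc |L n| ≤ 2*K/n := hfin
    _ = (4*b^2 + 4*|b|)/n := by rw [hK]; ring

/-- Model R: with `f_{j,s,s} = Σ_{ℓ=0}^s C(s,ℓ) C₀^ℓ C(m,ℓ) ℓ!/T_{j−1}^ℓ`,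
`T_j = T₀+σj`, and `μ_{1,s},…,μ_{s,s}` the negated roots of
`Q_s(x) = σ^{−s} Σ_{ℓ=0}^s C(s,ℓ) C₀^ℓ C(m,ℓ) ℓ! (xσ+T₀)^{s−ℓ}`, we have
`Σ_ℓ μ_{ℓ,s} = sT₀/σ + Λs` (with `Λ = C₀m/σ`), and
`∏_{j=1}^n f_{j,s,s} = n^{Λs} Γ(T₀/σ)^s / ∏_ℓ Γ(μ_{ℓ,s}) · (1 + O(1/n))`. -/
theorem product_f_gamma_form_model_R (σ T0 C0 : ℝ) (m s : ℕ)
    (hσ : 0 < σ) (hT0 : 0 < T0) (hm : 1 ≤ m) (hs : 1 ≤ s)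
    (f : ℕ → ℝ)
    (hf : ∀ j : ℕ, 1 ≤ j → f j
      = ∑ ℓ ∈ range (s + 1),
          (Nat.choose s ℓ : ℝ) * C0 ^ ℓ * (Nat.choose m ℓ : ℝ) * (Nat.factorial ℓ : ℝ)
            / (T0 + σ * ((j : ℝ) - 1)) ^ ℓ)
    (hfpos : ∀ j : ℕ, 1 ≤ j → 0 < f j)
    (mu : ℕ → ℝ)
    (hmu : ∀ x : ℝ,
      (1 / σ ^ s) * ∑ ℓ ∈ range (s + 1),
          (Nat.choose s ℓ : ℝ) * C0 ^ ℓ * (Nat.choose m ℓ : ℝ) * (Nat.factorial ℓ : ℝ)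
            * (x * σ + T0) ^ (s - ℓ)
        = ∏ ℓ ∈ Icc 1 s, (x + mu ℓ)) :
    (∑ ℓ ∈ Icc 1 s, mu ℓ = s * T0 / σ + (C0 * m / σ) * s) ∧
      (fun n : ℕ => (∏ j ∈ Icc 1 n, f j)
          / ((n : ℝ) ^ ((C0 * m / σ) * s) * Real.Gamma (T0 / σ) ^ s
              / ∏ ℓ ∈ Icc 1 s, Real.Gamma (mu ℓ)) - 1)
        =O[atTop] fun n : ℕ => 1 / (n : ℝ) := by
  set a : ℝ := T0 / σ with ha_def
  have ha : 0 < a := div_pos hT0 hσ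
  set c : ℕ → ℝ := fun ℓ => (Nat.choose s ℓ : ℝ) * C0 ^ ℓ * (Nat.choose m ℓ : ℝ)
    * (Nat.factorial ℓ : ℝ) with hc
  set P : Polynomial ℝ :=
    ∑ ℓ ∈ range (s+1), Polynomial.C (c ℓ / σ^ℓ) * (Polynomial.X + Polynomial.C a)^(s-ℓ) with hP
  set Q : Polynomial ℝ := ∏ ℓ ∈ Icc 1 s, (Polynomial.X + Polynomial.C (mu ℓ)) with hQ
  have hPQ : P = Q := by
    apply Polynomial.funext
    intro x
    rw [hP, hQ, Polynomial.eval_finset_sum, Polynomial.eval_prod]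
    simp only [Polynomial.eval_mul, Polynomial.eval_pow, Polynomial.eval_add,
      Polynomial.eval_X, Polynomial.eval_C]
    rw [← hmu x, Finset.mul_sum]
    apply Finset.sum_congr rfl
    intro ℓ hℓ
    have hℓs : ℓ ≤ s := by simpa [Nat.lt_succ_iff] using hℓ
    have hxT : x * σ + T0 = σ * (x + a) := by
      rw [ha_def]; field_simp; all_goals ring
    rw [hxT, mul_pow]
    have hpows : σ ^ (s - ℓ) * σ ^ ℓ = σ ^ s := by
      rw [← pow_add]; congr 1; omega
    have hσℓ : σ ^ ℓ ≠ 0 := by positivity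
    have hσs : σ ^ s ≠ 0 := by positivity
    field_simp
    rw [← hpows]
    ring
  have hne : ∀ ℓ ∈ Icc 1 s, (Polynomial.X + Polynomial.C (mu ℓ)) ≠ (0 : Polynomial ℝ) :=
    fun ℓ _ => (Polynomial.monic_X_add_C _).ne_zero
  have hQdeg : Q.natDegree = s := by
    rw [hQ, Polynomial.natDegree_prod _ _ hne]
    simp [Polynomial.natDegree_X_add_C]
  have hQnext : Q.nextCoeff = ∑ ℓ ∈ Icc 1 s, mu ℓ := by
    rw [hQ, Polynomial.Monic.nextCoeff_prod _ _
      (fun ℓ _ => Polynomial.monic_X_add_C _)]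
    simp [Polynomial.nextCoeff_X_add_C]
  have hQcoeff : Q.coeff (s - 1) = ∑ ℓ ∈ Icc 1 s, mu ℓ := by
    rw [← hQnext, Polynomial.nextCoeff_of_natDegree_pos (by omega : 0 < Q.natDegree), hQdeg]
  have hPcoeff : P.coeff (s - 1) = a * s + s * C0 * m / σ := by
    rw [hP, Polynomial.finset_sum_coeff]
    simp only [Polynomial.coeff_C_mul, Polynomial.coeff_X_add_C_pow]
    have hsplit : range (s+1) = insert 0 (insert 1 (Ico 2 (s+1))) := by
      ext x; simp [Nat.lt_succ_iff]; omega
    rw [hsplit, Finset.sum_insert (by simp), Finset.sum_insert (by simp)]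
    have hzero : ∑ ℓ ∈ Ico 2 (s+1),
        c ℓ / σ ^ ℓ * (a ^ (s - ℓ - (s-1)) * ((s-ℓ).choose (s-1) : ℝ)) = 0 := by
      apply Finset.sum_eq_zero
      intro ℓ hℓ
      simp only [Finset.mem_Ico] at hℓ
      have : (s - ℓ).choose (s-1) = 0 := Nat.choose_eq_zero_of_lt (by omega)
      rw [this]; simp
    rw [hzero]
    have h0 : c 0 = 1 := by simp [hc]
    have h1 : c 1 = s * C0 * m := by
      simp [hc, Nat.choose_one_right, Nat.factorial_one]
      all_goals ring
    have e1 : s - 0 - (s - 1) = 1 := by omega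
    have e2 : (s - 0).choose (s - 1) = s := by
      have : s - 0 = s := by omega
      rw [this]
      have h2 : s.choose (s - 1) = s.choose 1 := by
        have := Nat.choose_symm (show 1 ≤ s from hs)
        simpa using this
      rw [h2, Nat.choose_one_right]
    have e3 : s - 1 - (s - 1) = 0 := by omega
    have e4 : (s - 1).choose (s - 1) = 1 := Nat.choose_self _
    rw [e1, e2, e3, e4, h0, h1]
    simp
    all_goals ring
  have hsum0 : (∑ ℓ ∈ Icc 1 s, mu ℓ) = a * s + s * C0 * m / σ := by
    rw [← hQcoeff, ← hPQ, hPcoeff]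
  have hsum : ∑ ℓ ∈ Icc 1 s, mu ℓ = a * s + (C0 * m / σ) * s := by
    rw [hsum0]; ring
  constructor
  · rw [hsum, ha_def]; field_simp
  -- pointwise factorization of f
  have hfj : ∀ k : ℕ, f (k+1) = (∏ ℓ ∈ Icc 1 s, ((k:ℝ) + mu ℓ)) / ((k:ℝ) + a)^s := by
    intro k
    have hT : (0:ℝ) < T0 + σ * k := by positivity
    have hka : (0:ℝ) < (k:ℝ) + a := by positivity
    have hx := hmu (k:ℝ)
    have hf' := hf (k+1) (by omega)
    have hcast : ((k+1:ℕ):ℝ) - 1 = (k:ℝ) := by push_cast; ring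
    rw [hcast] at hf'
    have hsum : ∑ ℓ ∈ range (s + 1),
          (Nat.choose s ℓ : ℝ) * C0 ^ ℓ * (Nat.choose m ℓ : ℝ) * (Nat.factorial ℓ : ℝ)
            * ((k:ℝ) * σ + T0) ^ (s - ℓ)
        = (T0 + σ * k)^s * f (k+1) := by
      rw [hf', Finset.mul_sum]
      apply Finset.sum_congr rfl
      intro ℓ hℓ
      have hℓs : ℓ ≤ s := by simpa [Nat.lt_succ_iff] using hℓ
      have hTs : (T0 + σ * k)^(s-ℓ) * (T0 + σ * k)^ℓ = (T0 + σ * k)^s := by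
        rw [← pow_add]; congr 1; omega
      have hcomm : (k:ℝ) * σ + T0 = T0 + σ * k := by ring
      rw [hcomm]
      field_simp
      rw [← hTs]
      ring
    rw [hsum] at hx
    have hTa : T0 + σ * (k:ℝ) = σ * ((k:ℝ) + a) := by
      rw [ha_def]; field_simp; ring
    rw [hTa, mul_pow] at hx
    have hσs : σ ^ s ≠ 0 := by positivity
    rw [eq_div_iff (by positivity : ((k:ℝ) + a)^s ≠ 0), ← hx]
    field_simp
  -- positivity facts
  have hmune : ∀ ℓ ∈ Icc 1 s, ∀ k : ℕ, mu ℓ + k ≠ 0 := by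
    intro ℓ hℓ k hzero
    have h1 := hfpos (k+1) (by omega)
    rw [hfj k] at h1
    have h2 : (∏ ℓ' ∈ Icc 1 s, ((k:ℝ) + mu ℓ')) = 0 := by
      apply Finset.prod_eq_zero hℓ
      linarith
    rw [h2] at h1
    simp at h1
  have hane : ∀ k : ℕ, a + k ≠ 0 := fun k => by positivity
  have hΓa : Real.Gamma a ≠ 0 := (Real.Gamma_pos_of_pos ha).ne'
  have hΓmu : ∀ ℓ ∈ Icc 1 s, Real.Gamma (mu ℓ) ≠ 0 := by
    intro ℓ hℓ
    apply Real.Gamma_ne_zero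
    intro k hk
    exact hmune ℓ hℓ k (by rw [hk]; ring)
  -- product identity
  have hprod : ∀ n : ℕ, ∏ j ∈ Icc 1 n, f j
      = (∏ ℓ ∈ Icc 1 s, ∏ k ∈ range n, (mu ℓ + k)) / (∏ k ∈ range n, (a + k))^s := by
    intro n
    rw [← Finset.Ico_add_one_right_eq_Icc, Finset.prod_Ico_eq_prod_range]
    simp only [Nat.succ_sub_one, Nat.add_sub_cancel]
    have : ∀ k ∈ range n, f (1 + k)
        = (∏ ℓ ∈ Icc 1 s, ((k:ℝ) + mu ℓ)) / ((k:ℝ) + a)^s := by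
      intro k _
      rw [Nat.add_comm 1 k, hfj k]
    rw [Finset.prod_congr rfl this, Finset.prod_div_distrib]
    congr 1
    · rw [Finset.prod_comm]
      exact Finset.prod_congr rfl fun ℓ _ => Finset.prod_congr rfl fun k _ => by ring
    · rw [← Finset.prod_pow]
      exact Finset.prod_congr rfl fun k _ => by ring
  -- Gamma form
  have hgam : ∀ n : ℕ, ∏ j ∈ Icc 1 n, f j
      = (∏ ℓ ∈ Icc 1 s, (Real.Gamma (mu ℓ + n) / Real.Gamma (mu ℓ)))
        / (Real.Gamma (a + n) / Real.Gamma a)^s := by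
    intro n
    rw [hprod n]
    congr 1
    · apply Finset.prod_congr rfl
      intro ℓ hℓ
      rw [gamma_shift (mu ℓ) (hmune ℓ hℓ) n]
      field_simp [hΓmu ℓ hℓ]
      all_goals ring
    · congr 1
      rw [gamma_shift a hane n]
      field_simp [hΓa]
      all_goals ring
  set Λ' : ℝ := (C0 * m / σ) * s with hΛ
  have key : ∀ n : ℕ, 1 ≤ n →
      (∏ j ∈ Icc 1 n, f j)
          / ((n : ℝ) ^ Λ' * Real.Gamma a ^ s / ∏ ℓ ∈ Icc 1 s, Real.Gamma (mu ℓ))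
        = (∏ ℓ ∈ Icc 1 s, hfun (mu ℓ) n) / (hfun a n)^s := by
    intro n hn
    have hn0 : (0:ℝ) < n := by exact_mod_cast hn
    have hΓn : 0 < Real.Gamma n := Real.Gamma_pos_of_pos hn0
    have hNp : ∀ b : ℝ, (0:ℝ) < (n:ℝ) ^ b := fun b => Real.rpow_pos_of_pos hn0 b
    have hGm : ∀ b : ℝ, Real.Gamma (b + n) = hfun b n * (Real.Gamma n * (n:ℝ)^b) := by
      intro b
      rw [hfun, div_mul_cancel₀]
      exact (mul_pos hΓn (hNp b)).ne'
    have hhfa : 0 < hfun a n := by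
      rw [hfun]
      exact div_pos (Real.Gamma_pos_of_pos (by positivity)) (mul_pos hΓn (hNp a))
    have hhfmu : ∀ ℓ ∈ Icc 1 s, hfun (mu ℓ) n ≠ 0 := by
      intro ℓ hℓ
      rw [hfun]
      apply div_ne_zero _ (mul_pos hΓn (hNp (mu ℓ))).ne'
      rw [gamma_shift (mu ℓ) (hmune ℓ hℓ) n]
      exact mul_ne_zero (hΓmu ℓ hℓ) (Finset.prod_ne_zero_iff.2 fun k _ => hmune ℓ hℓ k)
    have hPμ : (∏ ℓ ∈ Icc 1 s, Real.Gamma (mu ℓ)) ≠ 0 :=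
      Finset.prod_ne_zero_iff.2 hΓmu
    have hcard : (Icc 1 s).card = s := by
      rw [Nat.card_Icc]; omega
    have e1 : ∏ ℓ ∈ Icc 1 s, Real.Gamma (mu ℓ + n)
        = (∏ ℓ ∈ Icc 1 s, hfun (mu ℓ) n)
          * (Real.Gamma n ^ s * (((n:ℝ)^a)^s * (n:ℝ)^Λ')) := by
      calc ∏ ℓ ∈ Icc 1 s, Real.Gamma (mu ℓ + n)
          = ∏ ℓ ∈ Icc 1 s, (hfun (mu ℓ) n * (Real.Gamma n * (n:ℝ)^(mu ℓ))) :=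
            Finset.prod_congr rfl fun ℓ _ => hGm (mu ℓ)
        _ = (∏ ℓ ∈ Icc 1 s, hfun (mu ℓ) n)
            * ((∏ ℓ ∈ Icc 1 s, Real.Gamma n) * ∏ ℓ ∈ Icc 1 s, (n:ℝ)^(mu ℓ)) := by
            rw [Finset.prod_mul_distrib, Finset.prod_mul_distrib]
        _ = (∏ ℓ ∈ Icc 1 s, hfun (mu ℓ) n)
            * (Real.Gamma n ^ s * (((n:ℝ)^a)^s * (n:ℝ)^Λ')) := by
            rw [Finset.prod_const, hcard, ← Real.rpow_sum_of_pos hn0, hsum,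
              Real.rpow_add hn0, ← Real.rpow_natCast ((n:ℝ)^a) s,
              ← Real.rpow_mul hn0.le]
    rw [hgam n, Finset.prod_div_distrib, e1, hGm a]
    have h1 : ((n:ℝ)^Λ') ≠ 0 := (hNp Λ').ne'
    have h2 : ((n:ℝ)^a) ≠ 0 := (hNp a).ne'
    have h3 : Real.Gamma a ^ s ≠ 0 := pow_ne_zero _ hΓa
    rw [div_pow, mul_pow, mul_pow]
    field_simp
  -- final asymptotic estimate
  set CC : ℝ := (∑ ℓ ∈ Icc 1 s, (4*(mu ℓ)^2 + 4*|mu ℓ|)) + s * (4*a^2 + 4*|a|) with hCC_def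
  have hCC : 0 ≤ CC := by positivity
  rw [isBigO_iff]
  refine ⟨2*CC, ?_⟩
  have hev2 : ∀ᶠ n : ℕ in atTop, ∀ ℓ ∈ Icc 1 s, 2*|mu ℓ| + 2 ≤ (n:ℝ) := by
    rw [eventually_all_finset]
    intro ℓ _
    exact tendsto_natCast_atTop_atTop.eventually_ge_atTop _
  filter_upwards [eventually_ge_atTop 1, hev2,
    tendsto_natCast_atTop_atTop.eventually_ge_atTop (2*|a| + 2),
    tendsto_natCast_atTop_atTop.eventually_ge_atTop CC] with n hn1 hn2 hn3 hn4
  have hn0 : (0:ℝ) < n := by exact_mod_cast hn1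
  rw [key n hn1]
  have hfp : ∀ ℓ ∈ Icc 1 s, 0 < hfun (mu ℓ) n := fun ℓ hℓ => hfun_pos (mu ℓ) (hn2 ℓ hℓ)
  have hfa : 0 < hfun a n := hfun_pos a hn3
  have hRpos : 0 < (∏ ℓ ∈ Icc 1 s, hfun (mu ℓ) n) / hfun a n ^ s :=
    div_pos (Finset.prod_pos hfp) (pow_pos hfa s)
  have hlogR : |Real.log ((∏ ℓ ∈ Icc 1 s, hfun (mu ℓ) n) / hfun a n ^ s)| ≤ CC / n := by
    rw [Real.log_div (Finset.prod_pos hfp).ne' (pow_pos hfa s).ne',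
      Real.log_prod (fun ℓ hℓ => (hfp ℓ hℓ).ne'), Real.log_pow]
    calc |(∑ ℓ ∈ Icc 1 s, Real.log (hfun (mu ℓ) n)) - (s:ℝ) * Real.log (hfun a n)|
        ≤ |∑ ℓ ∈ Icc 1 s, Real.log (hfun (mu ℓ) n)| + |(s:ℝ) * Real.log (hfun a n)| :=
          abs_sub _ _
      _ ≤ (∑ ℓ ∈ Icc 1 s, |Real.log (hfun (mu ℓ) n)|)
          + (s:ℝ) * |Real.log (hfun a n)| := by
          gcongr
          · exact Finset.abs_sum_le_sum_abs _ _
          · rw [abs_mul, Nat.abs_cast]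
      _ ≤ (∑ ℓ ∈ Icc 1 s, (4*(mu ℓ)^2 + 4*|mu ℓ|)/(n:ℝ))
          + (s:ℝ) * ((4*a^2 + 4*|a|)/(n:ℝ)) := by
          gcongr with ℓ hℓ
          · exact hfun_log_bound (mu ℓ) (hmune ℓ hℓ) (hn2 ℓ hℓ)
          · exact hfun_log_bound a hane hn3
      _ = CC / n := by
          rw [← Finset.sum_div, hCC_def]
          field_simp
  have hlog1 : |Real.log ((∏ ℓ ∈ Icc 1 s, hfun (mu ℓ) n) / hfun a n ^ s)| ≤ 1 :=
    hlogR.trans ((div_le_one hn0).2 hn4)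
  have habs := Real.abs_exp_sub_one_le hlog1
  rw [Real.exp_log hRpos] at habs
  have hfinal : |(∏ ℓ ∈ Icc 1 s, hfun (mu ℓ) n) / hfun a n ^ s - 1| ≤ 2 * CC / n := by
    calc |(∏ ℓ ∈ Icc 1 s, hfun (mu ℓ) n) / hfun a n ^ s - 1|
        ≤ 2 * |Real.log ((∏ ℓ ∈ Icc 1 s, hfun (mu ℓ) n) / hfun a n ^ s)| := habs
      _ ≤ 2 * (CC / n) := by linarith
      _ = 2 * CC / n := by ring
  rw [Real.norm_eq_abs, Real.norm_eq_abs]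
  calc |(∏ ℓ ∈ Icc 1 s, hfun (mu ℓ) n) / hfun a n ^ s - 1| ≤ 2 * CC / n := hfinal
    _ = 2 * CC * |1/(n:ℝ)| := by
        rw [abs_of_nonneg (by positivity : (0:ℝ) ≤ 1/(n:ℝ))]
        ring
end
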